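/- The regularized functions f_γ, γ ∈ T̂, built on the Stone–Čech compactification of T, have the same pointwise supremum as the original family: sup_{γ ∈ T̂} f_γ = sup_{t ∈ T} f_t = f, and each f_γ is convex. -/

import Mathlib

open Filter Topology Set Pointwise

noncomputable section

universe u

variable {X : Type*} [AddCommGroup X] [Module ℝ X] [TopologicalSpace X]

/-- An extended-real-valued function is convex iff its epigraph is convex in `X × ℝ`. -/
def IsConvexEF (g : X → EReal) : Prop :=
  Convex ℝ {p : X × ℝ | g p.1 ≤ (p.2 : EReal)}

/-- A function is proper if it is somewhere finite and nowhere `-∞`. -/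
def ProperEF (g : X → EReal) : Prop := (∃ x, g x ≠ ⊤) ∧ ∀ x, g x ≠ ⊥

/-- Effective domain `dom g`. -/
def edom (g : X → EReal) : Set X := {x | g x < ⊤}

-- Indicator function (`0` on `A`, `+∞` outside).
open Classical in
def indEF (A : Set X) : X → EReal := fun x => if x ∈ A then (0 : EReal) else ⊤

/-- `ε`-subdifferential of `g` at `x` (a subset of the weak* dual; empty unless `g x ∈ ℝ`). -/
def epsSubdiff (g : X → EReal) (x : X) (ε : ℝ) : Set (WeakDual ℝ X) :=
  {p | (∃ r : ℝ, g x = (r : EReal)) ∧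
    ∀ y, g x + ((p (y - x) : ℝ) : EReal) - (ε : EReal) ≤ g y}

/-- Subdifferential of `g` at `x`. -/
def subdiffE (g : X → EReal) (x : X) : Set (WeakDual ℝ X) := epsSubdiff g x 0

/-- Normal cone `N_A(x)` (empty when `x ∉ A`). -/
def normalConeE (A : Set X) (x : X) : Set (WeakDual ℝ X) :=
  {p | x ∈ A ∧ ∀ z ∈ A, p (z - x) ≤ 0}

/-- Orthogonal space `A^⊥ ⊆ X*` of a set `A ⊆ X`. -/
def orthSet (A : Set X) : Set (WeakDual ℝ X) := {p | ∀ z ∈ A, p z = 0}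

/-- The family `F(x)` of finite-dimensional linear subspaces of `X` containing `x`. -/
def finDimThrough (x : X) : Set (Submodule ℝ X) :=
  {L | FiniteDimensional ℝ L ∧ x ∈ L}

/-- Pointwise supremum `f = sup_t f_t`. -/
def supF {T : Type*} (fT : T → X → EReal) : X → EReal := fun z => ⨆ t, fT t z

/-- `ε`-active index set `T_ε(x)`. -/
def activeSet {T : Type*} (fT : T → X → EReal) (x : X) (ε : ℝ) : Set T :=
  {t | supF fT x - (ε : EReal) ≤ fT t x}

/-- Fenchel conjugate `g* : X* → EReal`. -/
def conjE (g : X → EReal) (p : WeakDual ℝ X) : EReal := ⨆ y, ((p y : ℝ) : EReal) - g y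

/-- Biconjugate `g** : X → EReal` (with `X` viewed inside `X**`). -/
def biconjE (g : X → EReal) (x : X) : EReal :=
  ⨆ p : WeakDual ℝ X, ((p x : ℝ) : EReal) - conjE g p

/-- Closure of a subset of the dual for the strong topology `β(X*,X)` (the topology of
uniform convergence on von Neumann bounded subsets of `X`). -/
def strongCl (S : Set (WeakDual ℝ X)) : Set (WeakDual ℝ X) :=
  {p | ∀ B : Set X, Bornology.IsVonNBounded ℝ B → ∀ ε : ℝ, 0 < ε →
    ∃ q ∈ S, ∀ z ∈ B, |q z - p z| ≤ ε}

/-- The weak topology `σ(X,X*)` on `X`. -/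
def weakTop (X : Type*) [AddCommGroup X] [Module ℝ X] [TopologicalSpace X] :
    TopologicalSpace X :=
  TopologicalSpace.induced (fun x => fun p : WeakDual ℝ X => p x) Pi.topologicalSpace

/-- Subdifferential at `p ∈ X*` of a function defined on the weak* dual, as a subset of `X`
(the topological dual of `(X*, w*)` being identified with `X`). -/
def subdiffStar (h : WeakDual ℝ X → EReal) (p : WeakDual ℝ X) : Set X :=
  {x | (∃ r : ℝ, h p = (r : EReal)) ∧
    ∀ q : WeakDual ℝ X, h p + ((q x - p x : ℝ) : EReal) ≤ h q}

/-- Normal cone in `X` to a subset `A` of the dual at `p ∈ A` (empty when `p ∉ A`). -/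
def normalConeStar (A : Set (WeakDual ℝ X)) (p : WeakDual ℝ X) : Set X :=
  {x | p ∈ A ∧ ∀ q ∈ A, q x - p x ≤ 0}

/-- Evaluation embedding `t ↦ γ_t`, `γ_t(φ) = φ(t)`, of `T` into `[0,1]^{C(T,[0,1])}`. -/
def scEmb (T : Type*) [TopologicalSpace T] : T → (C(T, unitInterval) → unitInterval) :=
  fun t φ => φ t

/-- The Stone–Čech compactification `T̂`: the closure of the range of `t ↦ γ_t` in the
compact product space `[0,1]^{C(T,[0,1])}`. -/
def scComp (T : Type*) [TopologicalSpace T] : Set (C(T, unitInterval) → unitInterval) :=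
  closure (Set.range (scEmb T))

/-- Regularized function `f_γ(z) = limsup_{γ_t → γ, t ∈ T} f_t(z)`. -/
def freg {T : Type*} [TopologicalSpace T] (fT : T → X → EReal)
    (γ : C(T, unitInterval) → unitInterval) : X → EReal :=
  fun z => Filter.limsup (fun t => fT t z) (Filter.comap (scEmb T) (𝓝 γ))

/-- Extended `ε`-active index set `T̂_ε(x) = {γ ∈ T̂ : f_γ(x) ≥ f(x) - ε}`. -/
def scActiveE {T : Type*} [TopologicalSpace T] (fT : T → X → EReal) (x : X) (ε : ℝ) :
    Set (C(T, unitInterval) → unitInterval) :=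
  {γ | γ ∈ scComp T ∧ supF fT x - (ε : EReal) ≤ freg fT γ x}

/-- Extended exact active index set `T̂(x) = {γ ∈ T̂ : f_γ(x) = f(x)}`. -/
def scActiveEq {T : Type*} [TopologicalSpace T] (fT : T → X → EReal) (x : X) :
    Set (C(T, unitInterval) → unitInterval) :=
  {γ | γ ∈ scComp T ∧ freg fT γ x = supF fT x}

variable [IsTopologicalAddGroup X] [ContinuousSMul ℝ X] [LocallyConvexSpace ℝ X] [T2Space X]

/-- the regularized functions `f_γ`, `γ ∈ T̂`, built on the Stone–Čech
compactification of `T`, have the same pointwise supremum as the original family,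
and each `f_γ` is convex. -/
theorem freg_sup_eq_sup_and_convex {T : Type*} [TopologicalSpace T] [Nonempty T]
    (fT : T → X → EReal) (hconv : ∀ t, IsConvexEF (fT t)) :
    (∀ z : X, (⨆ γ ∈ scComp T, freg fT γ z) = supF fT z) ∧
    (∀ γ ∈ scComp T, IsConvexEF (freg fT γ)) := by
  
  constructor
  · intro z
    apply le_antisymm
    · refine iSup₂_le fun γ _ => ?_
      refine Filter.limsup_le_of_le (by isBoundedDefault) ?_
      exact Eventually.of_forall fun t => le_iSup (fun t => fT t z) t
    · refine iSup_le fun t => ?_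
      have hmem : scEmb T t ∈ scComp T := subset_closure ⟨t, rfl⟩
      refine le_trans ?_ (le_iSup₂ (f := fun γ _ => freg fT γ z) (scEmb T t) hmem)
      have hpure : (pure t : Filter T) ≤ Filter.comap (scEmb T) (𝓝 (scEmb T t)) := by
        rw [← Filter.map_le_iff_le_comap, Filter.map_pure]
        exact pure_le_nhds _
      refine Filter.le_limsup_of_frequently_le ?_ (by isBoundedDefault)
      exact Filter.Frequently.filter_mono ((Filter.Eventually.frequently (Filter.eventually_pure.mpr le_rfl))) hpure
  · intro γ _
    rintro ⟨x, r⟩ hx ⟨y, s⟩ hy a b ha hb hab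
    simp only [Set.mem_setOf_eq] at hx hy ⊢
    have hsmul : (a • (x, r) + b • (y, s)).1 = a • x + b • y := rfl
    have hsmul2 : (a • (x, r) + b • (y, s)).2 = a * r + b * s := rfl
    rw [hsmul, hsmul2]
    rw [← EReal.le_of_forall_lt_iff_le]
    intro c hc
    have hδ : (0 : ℝ) < c - (a * r + b * s) := by
      have : ((a * r + b * s : ℝ) : EReal) < (c : EReal) := hc
      have := EReal.coe_lt_coe_iff.mp this
      linarith
    set δ := c - (a * r + b * s) with hδdef
    have hx' : ∀ᶠ t in Filter.comap (scEmb T) (𝓝 γ), fT t x < ((r + δ : ℝ) : EReal) := by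
      refine Filter.eventually_lt_of_limsup_lt (lt_of_le_of_lt hx ?_)
      exact_mod_cast (by linarith : r < r + δ)
    have hy' : ∀ᶠ t in Filter.comap (scEmb T) (𝓝 γ), fT t y < ((s + δ : ℝ) : EReal) := by
      refine Filter.eventually_lt_of_limsup_lt (lt_of_le_of_lt hy ?_)
      exact_mod_cast (by linarith : s < s + δ)
    refine Filter.limsup_le_of_le (by isBoundedDefault) ?_
    filter_upwards [hx', hy'] with t htx hty
    have hmem := hconv t (show (x, r + δ) ∈ _ from htx.le) (show (y, s + δ) ∈ _ from hty.le)
      ha hb hab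
    have : fT t (a • x + b • y) ≤ ((a * (r + δ) + b * (s + δ) : ℝ) : EReal) := hmem
    refine this.trans ?_
    have heq : a * (r + δ) + b * (s + δ) = c := by
      have h1 : a * (r + δ) + b * (s + δ) = a * r + b * s + (a + b) * δ := by ring
      rw [h1, hab, hδdef]; ring
    rw [heq]
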